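/- For every real number σ > 0 and every real N > 0, the difference ∫_{0}^{∞} log₂(1 + ρ·N·r²) · (r/σ²) e^{−r²/(2σ²)} dr − (2/ln 2)·( ln(√(ρ·N) · σ) + (ln 2)/2 − γ/2 ) tends to 0 as ρ → +∞. -/

import Mathlib

open MeasureTheory Set Filter Real
open scoped Topology

lemma log_add_abs_le {t ε : ℝ} (ht : 0 < t) (hε : 0 ≤ ε) (hε1 : ε ≤ 1) :
    |Real.log (t + ε)| ≤ 2 * t ^ (-(1/2) : ℝ) + t := by
  have htε : 0 < t + ε := by linarith
  have hrp : (0:ℝ) < t ^ (-(1/2) : ℝ) := Real.rpow_pos_of_pos ht _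
  rcases le_or_gt 1 (t + ε) with h | h
  · rw [abs_of_nonneg (Real.log_nonneg h)]
    have h1 : Real.log (t + ε) ≤ t + ε - 1 := Real.log_le_sub_one_of_pos htε
    linarith
  · rw [abs_of_nonpos (Real.log_nonpos htε.le h.le)]
    have h1 : Real.log t ≤ Real.log (t + ε) := Real.log_le_log ht (by linarith)
    have hrt : Real.log (t ^ (-(1/2):ℝ)) = -(1/2) * Real.log t := Real.log_rpow ht _
    have hx : Real.log (t ^ (-(1/2):ℝ)) ≤ t ^ (-(1/2):ℝ) - 1 :=
      Real.log_le_sub_one_of_pos hrp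
    linarith [ht.le]

lemma boundInt : IntegrableOn
    (fun t : ℝ => (2 * t ^ (-(1/2) : ℝ) + t) * Real.exp (-t)) (Ioi 0) := by
  have h1 : IntegrableOn (fun t : ℝ => Real.exp (-t) * t ^ ((1/2:ℝ) - 1)) (Ioi 0) :=
    Real.GammaIntegral_convergent (by norm_num)
  have h2 : IntegrableOn (fun t : ℝ => Real.exp (-t) * t ^ ((2:ℝ) - 1)) (Ioi 0) :=
    Real.GammaIntegral_convergent (by norm_num)
  refine IntegrableOn.congr_fun ((h1.const_mul 2).add h2) (fun t ht => ?_) measurableSet_Ioi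
  show 2 * (Real.exp (-t) * t ^ ((1/2:ℝ)-1)) + Real.exp (-t) * t ^ ((2:ℝ)-1) = _
  have ht' : (0:ℝ) < t := ht
  have e1 : ((1:ℝ)/2) - 1 = -(1/2) := by norm_num
  have e2 : ((2:ℝ) - 1) = 1 := by norm_num
  rw [e1, e2, Real.rpow_one]
  ring

lemma intOn_log_add {ε : ℝ} (hε : 0 ≤ ε) (hε1 : ε ≤ 1) :
    IntegrableOn (fun t : ℝ => Real.log (t + ε) * Real.exp (-t)) (Ioi 0) := by
  refine boundInt.mono' ?_ ?_
  · exact ((Real.measurable_log.comp (measurable_id.add_const ε)).mul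
      (measurable_id.neg.exp)).aestronglyMeasurable
  · filter_upwards [ae_restrict_mem measurableSet_Ioi] with t ht
    rw [norm_mul, Real.norm_eq_abs, Real.norm_eq_abs, abs_of_pos (Real.exp_pos _)]
    exact mul_le_mul_of_nonneg_right (log_add_abs_le ht hε hε1) (Real.exp_pos _).le

lemma intOn_log_one_add {c : ℝ} (hc : 0 < c) :
    IntegrableOn (fun t : ℝ => Real.log (1 + c * t) * Real.exp (-t)) (Ioi 0) := by
  have h2 : IntegrableOn (fun t : ℝ => Real.exp (-t) * t ^ ((2:ℝ) - 1)) (Ioi 0) :=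
    Real.GammaIntegral_convergent (by norm_num)
  refine (h2.const_mul c).mono' ?_ ?_
  · exact ((Real.measurable_log.comp ((measurable_id.const_mul c).const_add 1)).mul
      (measurable_id.neg.exp)).aestronglyMeasurable
  · filter_upwards [ae_restrict_mem measurableSet_Ioi] with t ht
    have ht' : (0:ℝ) < t := ht
    have h1 : (0:ℝ) < 1 + c * t := by nlinarith
    have hl0 : 0 ≤ Real.log (1 + c * t) := Real.log_nonneg (by nlinarith)
    have hl : Real.log (1 + c * t) ≤ c * t := by
      have := Real.log_le_sub_one_of_pos h1; linarith
    rw [norm_mul, Real.norm_eq_abs, Real.norm_eq_abs, abs_of_nonneg hl0,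
      abs_of_pos (Real.exp_pos _)]
    have e2 : ((2:ℝ) - 1) = 1 := by norm_num
    rw [e2, Real.rpow_one]
    calc Real.log (1 + c * t) * Real.exp (-t) ≤ (c * t) * Real.exp (-t) :=
          mul_le_mul_of_nonneg_right hl (Real.exp_pos _).le
      _ = c * (Real.exp (-t) * t) := by ring

lemma integral_log_mul_exp_neg :
    ∫ t in Ioi (0:ℝ), Real.log t * Real.exp (-t) = -Real.eulerMascheroniConstant := by
  have h1 : HasDerivAt Complex.GammaIntegral
      (∫ t : ℝ in Ioi 0, (t:ℂ) ^ ((1:ℂ) - 1) * (Real.log t * Real.exp (-t))) 1 :=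
    Complex.hasDerivAt_GammaIntegral (by simp)
  have h2 : (∫ t : ℝ in Ioi 0, (t:ℂ) ^ ((1:ℂ) - 1) * (Real.log t * Real.exp (-t)))
      = ((∫ t in Ioi (0:ℝ), Real.log t * Real.exp (-t) : ℝ) : ℂ) := by
    have e : (∫ t : ℝ in Ioi 0, (t:ℂ) ^ ((1:ℂ) - 1) * (Real.log t * Real.exp (-t)))
        = ∫ t : ℝ in Ioi 0, ((Real.log t * Real.exp (-t) : ℝ) : ℂ) := by
      refine setIntegral_congr_fun measurableSet_Ioi fun t ht => ?_
      rw [sub_self, Complex.cpow_zero, one_mul]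
      push_cast; ring
    rw [e]; exact integral_ofReal
  rw [h2] at h1
  have heq : Complex.Gamma =ᶠ[nhds (1:ℂ)] Complex.GammaIntegral := by
    filter_upwards [(isOpen_lt continuous_const Complex.continuous_re).mem_nhds
      (by simp : (0:ℝ) < (1:ℂ).re)] with s hs
    exact Complex.Gamma_eq_integral hs
  have h3 : HasDerivAt Complex.Gamma
      ((∫ t in Ioi (0:ℝ), Real.log t * Real.exp (-t) : ℝ) : ℂ) 1 :=
    h1.congr_of_eventuallyEq heq
  have h4 := Complex.hasDerivAt_Gamma_one
  have h5 := h3.unique h4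
  exact_mod_cast h5

lemma tendsto_h :
    Tendsto (fun ε => ∫ t in Ioi (0:ℝ), Real.log (t + ε) * Real.exp (-t)) (𝓝[>] (0:ℝ))
      (𝓝 (∫ t in Ioi (0:ℝ), Real.log t * Real.exp (-t))) := by
  apply tendsto_integral_filter_of_dominated_convergence
    (fun t => (2 * t ^ (-(1/2) : ℝ) + t) * Real.exp (-t))
  · filter_upwards [self_mem_nhdsWithin] with ε hε
    exact ((Real.measurable_log.comp (measurable_id.add_const ε)).mul
      (measurable_id.neg.exp)).aestronglyMeasurable
  · filter_upwards [Ioc_mem_nhdsGT zero_lt_one] with ε hε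
    filter_upwards [ae_restrict_mem measurableSet_Ioi] with t ht
    rw [norm_mul, Real.norm_eq_abs, Real.norm_eq_abs, abs_of_pos (Real.exp_pos _)]
    exact mul_le_mul_of_nonneg_right (log_add_abs_le ht hε.1.le hε.2) (Real.exp_pos _).le
  · exact boundInt
  · filter_upwards [ae_restrict_mem measurableSet_Ioi] with t ht
    have hc : ContinuousAt (fun ε : ℝ => Real.log (t + ε) * Real.exp (-t)) 0 := by
      refine ContinuousAt.mul ?_ continuousAt_const
      have : ContinuousAt Real.log ((fun ε : ℝ => t + ε) 0) := by
        refine Real.continuousAt_log ?_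
        simpa using ne_of_gt ht
      exact this.comp (continuous_const.add continuous_id).continuousAt
    have h2 := hc.tendsto.mono_left (nhdsWithin_le_nhds (s := Ioi (0:ℝ)))
    simpa using h2

lemma logb_eq (c x : ℝ) : Real.logb 2 x = Real.log x / Real.log 2 := rfl

lemma intOn_logb_one_add {c : ℝ} (hc : 0 < c) :
    IntegrableOn (fun t : ℝ => Real.logb 2 (1 + c * t) * Real.exp (-t)) (Ioi 0) := by
  refine IntegrableOn.congr_fun ((intOn_log_one_add hc).const_mul (1 / Real.log 2))
    (fun t _ => ?_) measurableSet_Ioi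
  show 1 / Real.log 2 * (Real.log (1 + c * t) * Real.exp (-t)) = _
  rw [Real.logb]; ring

lemma subst_lemma {σ : ℝ} (hσ : 0 < σ) {a : ℝ} (ha : 0 < a) :
    (∫ r in Ioi (0:ℝ),
        Real.logb 2 (1 + a * r ^ 2) * ((r / σ ^ 2) * Real.exp (-r ^ 2 / (2 * σ ^ 2))))
      = ∫ t in Ioi (0:ℝ), Real.logb 2 (1 + (2 * σ ^ 2 * a) * t) * Real.exp (-t) := by
  have hσ2 : (0:ℝ) < σ ^ 2 := by positivity
  set c : ℝ := 2 * σ ^ 2 * a with hc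
  have hcpos : 0 < c := by positivity
  set f : ℝ → ℝ := fun r => r ^ 2 / (2 * σ ^ 2) with hfdef
  set g : ℝ → ℝ := fun t => Real.logb 2 (1 + c * t) * Real.exp (-t) with hgdef
  have himg1 : f '' Ioi 0 ⊆ Ioi 0 := by
    rintro x ⟨r, hr, rfl⟩
    have hr' : (0:ℝ) < r := hr
    simp only [mem_Ioi]
    show (0:ℝ) < r ^ 2 / (2 * σ ^ 2)
    positivity
  have himg2 : f '' Ici 0 ⊆ Ici 0 := by
    rintro x ⟨r, hr, rfl⟩
    simp only [mem_Ici]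
    show (0:ℝ) ≤ r ^ 2 / (2 * σ ^ 2)
    positivity
  have hgcont : ContinuousOn g (Ici 0) := by
    refine ContinuousOn.mul ?_ (Real.continuous_exp.comp continuous_neg).continuousOn
    refine ContinuousOn.div_const ?_ _
    refine ContinuousOn.log ((continuous_const.add (continuous_const.mul continuous_id)).continuousOn) ?_
    intro t ht
    have : (0:ℝ) ≤ t := ht
    nlinarith
  have key := MeasureTheory.integral_comp_mul_deriv_Ioi
    (f := f) (f' := fun x => x / σ ^ 2) (g := g) (a := 0)
    (by fun_prop)
    (by
      apply Tendsto.atTop_div_const (by positivity)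
      exact tendsto_pow_atTop two_ne_zero)
    (by
      intro x hx
      have h1 : HasDerivAt f (x / σ ^ 2) x := by
        have := (hasDerivAt_pow 2 x).div_const (2 * σ ^ 2)
        refine this.congr_deriv ?_
        field_simp
        ring
      exact h1.hasDerivWithinAt)
    (hgcont.mono (himg1.trans Ioi_subset_Ici_self))
    (by
      refine (IntegrableOn.mono_set ?_ himg2)
      rw [integrableOn_Ici_iff_integrableOn_Ioi]
      exact intOn_logb_one_add hcpos)
    (by
      -- integrability of (g ∘ f) x * f' x on Ici 0
      rw [integrableOn_Ici_iff_integrableOn_Ioi]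
      have hint : IntegrableOn
          (fun x : ℝ => (a / (Real.log 2 * σ ^ 2)) * (x ^ (3:ℝ) * Real.exp (-(1/(2*σ^2)) * x ^ 2)))
          (Ioi 0) :=
        (integrableOn_rpow_mul_exp_neg_mul_sq (by positivity) (by norm_num)).const_mul _
      refine hint.mono' ?_ ?_
      · refine Measurable.aestronglyMeasurable ?_
        refine Measurable.mul ?_ (measurable_id.div_const _)
        refine Measurable.mul ?_ ?_
        · exact (Real.measurable_log.comp
            ((measurable_id.pow_const 2 |>.div_const _ |>.const_mul c).const_add 1)).div_const _
        · exact ((measurable_id.pow_const 2 |>.div_const _).neg).exp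
      · filter_upwards [ae_restrict_mem measurableSet_Ioi] with x hx
        have hx' : (0:ℝ) < x := hx
        have harg : (0:ℝ) < 1 + c * f x := by
          have : 0 ≤ c * f x := by
            apply mul_nonneg hcpos.le
            positivity
          linarith
        have hfx : c * f x = a * x ^ 2 := by
          simp only [hfdef, hc]
          field_simp
        have hlog0 : 0 ≤ Real.log (1 + c * f x) := Real.log_nonneg (by nlinarith [sq_nonneg x])
        have hlog : Real.log (1 + c * f x) ≤ a * x ^ 2 := by
          have := Real.log_le_sub_one_of_pos harg
          rw [hfx] at this ⊢
          linarith
        have hexp : Real.exp (-(f x)) = Real.exp (-(1/(2*σ^2)) * x ^ 2) := by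
          simp only [hfdef]
          ring_nf
        show ‖Real.logb 2 (1 + c * f x) * Real.exp (-(f x)) * (x / σ ^ 2)‖ ≤ _
        rw [Real.norm_eq_abs, abs_mul, abs_mul, Real.logb,
          abs_of_nonneg (div_nonneg hlog0 (Real.log_nonneg one_le_two)),
          abs_of_pos (Real.exp_pos _), abs_of_pos (div_pos hx' hσ2), hexp]
        have hx3 : x ^ (3:ℝ) = x ^ (3:ℕ) := by
          rw [← Real.rpow_natCast x 3]; norm_num
        have hlog2 : (0:ℝ) < Real.log 2 := Real.log_pos one_lt_two
        calc Real.log (1 + c * f x) / Real.log 2 * Real.exp (-(1/(2*σ^2)) * x ^ 2) * (x / σ ^ 2)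
            = (Real.log (1 + c * f x) * (Real.exp (-(1/(2*σ^2)) * x ^ 2) * x)) /
                (Real.log 2 * σ ^ 2) := by ring
          _ ≤ ((a * x ^ 2) * (Real.exp (-(1/(2*σ^2)) * x ^ 2) * x)) /
                (Real.log 2 * σ ^ 2) := by gcongr
          _ = (a / (Real.log 2 * σ ^ 2)) * (x ^ (3:ℝ) * Real.exp (-(1/(2*σ^2)) * x ^ 2)) := by
              rw [hx3]; ring
      )
  have hf0 : f 0 = 0 := by simp [hfdef]
  rw [hf0] at key
  rw [← key]
  refine setIntegral_congr_fun measurableSet_Ioi fun r hr => ?_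
  have hr' : (0:ℝ) < r := hr
  have h1 : c * (r ^ 2 / (2 * σ ^ 2)) = a * r ^ 2 := by field_simp; ring
  simp only [Function.comp, hgdef, hfdef]
  rw [h1, neg_div]
  ring

-- key decomposition for c ≥ 1
lemma integral_decomp {c : ℝ} (hc : 1 ≤ c) :
    (∫ t in Ioi (0:ℝ), Real.logb 2 (1 + c * t) * Real.exp (-t))
      = (1 / Real.log 2) * (Real.log c +
          ∫ t in Ioi (0:ℝ), Real.log (t + 1/c) * Real.exp (-t)) := by
  have hc0 : (0:ℝ) < c := lt_of_lt_of_le one_pos hc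
  have h1 : (∫ t in Ioi (0:ℝ), Real.logb 2 (1 + c * t) * Real.exp (-t))
      = (1 / Real.log 2) * ∫ t in Ioi (0:ℝ), Real.log (1 + c * t) * Real.exp (-t) := by
    rw [← integral_const_mul]
    refine setIntegral_congr_fun measurableSet_Ioi fun t ht => ?_
    rw [Real.logb]; ring
  have h2 : (∫ t in Ioi (0:ℝ), Real.log (1 + c * t) * Real.exp (-t))
      = Real.log c + ∫ t in Ioi (0:ℝ), Real.log (t + 1/c) * Real.exp (-t) := by
    have e1 : ∀ t ∈ Ioi (0:ℝ), Real.log (1 + c * t) * Real.exp (-t)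
        = Real.log c * Real.exp (-t) + Real.log (t + 1/c) * Real.exp (-t) := by
      intro t ht
      have ht' : (0:ℝ) < t := ht
      have harg : (0:ℝ) < t + 1/c := by positivity
      have : (1:ℝ) + c * t = c * (t + 1/c) := by field_simp; ring
      rw [this, Real.log_mul hc0.ne' harg.ne']
      ring
    have hexp : IntegrableOn (fun t : ℝ => Real.exp (-t)) (Ioi 0) := by
      refine IntegrableOn.congr_fun (Real.GammaIntegral_convergent one_pos)
        (fun t ht => ?_) measurableSet_Ioi
      show Real.exp (-t) * t ^ ((1:ℝ)-1) = _
      rw [sub_self, Real.rpow_zero, mul_one]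
    rw [setIntegral_congr_fun measurableSet_Ioi e1, integral_add
      (hexp.const_mul _)
      (intOn_log_add (by positivity) (by
        rw [div_le_one hc0]; exact hc)),
      integral_const_mul, integral_exp_neg_Ioi_zero, mul_one]
  rw [h1, h2]

theorem hbs_se_approx_asymptotically_exact (σ N : ℝ) (hσ : 0 < σ) (hN : 0 < N) :
    Filter.Tendsto
      (fun ρ : ℝ =>
        (∫ r in Set.Ioi (0 : ℝ),
            Real.logb 2 (1 + ρ * N * r ^ 2) * ((r / σ ^ 2) * Real.exp (-r ^ 2 / (2 * σ ^ 2)))) -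
          (2 / Real.log 2) *
            (Real.log (Real.sqrt (ρ * N) * σ) + Real.log 2 / 2 -
              Real.eulerMascheroniConstant / 2))
      Filter.atTop (nhds 0) := by
  have hσ2 : (0:ℝ) < σ ^ 2 := by positivity
  set γ := Real.eulerMascheroniConstant with hγ
  set h : ℝ → ℝ := fun ε => ∫ t in Ioi (0:ℝ), Real.log (t + ε) * Real.exp (-t) with hh
  -- eventual equality
  have key : ∀ᶠ ρ in atTop, (∫ r in Set.Ioi (0 : ℝ),
            Real.logb 2 (1 + ρ * N * r ^ 2) * ((r / σ ^ 2) * Real.exp (-r ^ 2 / (2 * σ ^ 2)))) -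
          (2 / Real.log 2) *
            (Real.log (Real.sqrt (ρ * N) * σ) + Real.log 2 / 2 - γ / 2)
      = (1 / Real.log 2) * (h (1 / (2 * σ ^ 2 * (ρ * N))) + γ) := by
    filter_upwards [eventually_ge_atTop (max 1 (1 / (2 * σ ^ 2 * N)))] with ρ hρ
    have hρ1 : (1:ℝ) ≤ ρ := le_trans (le_max_left _ _) hρ
    have hρ0 : (0:ℝ) < ρ := lt_of_lt_of_le one_pos hρ1
    have hρN : (0:ℝ) < ρ * N := mul_pos hρ0 hN
    set c : ℝ := 2 * σ ^ 2 * (ρ * N) with hc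
    have hc0 : (0:ℝ) < c := by positivity
    have hc1 : (1:ℝ) ≤ c := by
      have h2 : 1 / (2 * σ ^ 2 * N) ≤ ρ := le_trans (le_max_right _ _) hρ
      rw [div_le_iff₀ (by positivity)] at h2
      calc (1:ℝ) ≤ ρ * (2 * σ ^ 2 * N) := h2
        _ = c := by rw [hc]; ring
    have hI : (∫ r in Set.Ioi (0 : ℝ),
            Real.logb 2 (1 + ρ * N * r ^ 2) * ((r / σ ^ 2) * Real.exp (-r ^ 2 / (2 * σ ^ 2))))
        = (1 / Real.log 2) * (Real.log c + h (1/c)) := by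
      rw [subst_lemma hσ hρN, integral_decomp hc1]
    have hA : (2 / Real.log 2) *
            (Real.log (Real.sqrt (ρ * N) * σ) + Real.log 2 / 2 - γ / 2)
        = (1 / Real.log 2) * (Real.log c - γ) := by
      have h1 : Real.log (Real.sqrt (ρ * N) * σ) = Real.log (ρ * N) / 2 + Real.log σ := by
        rw [Real.log_mul (by positivity) hσ.ne', Real.log_sqrt hρN.le]
      have h2 : Real.log c = Real.log 2 + 2 * Real.log σ + Real.log (ρ * N) := by
        rw [hc, Real.log_mul (by positivity) hρN.ne', Real.log_mul two_ne_zero (by positivity),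
          Real.log_pow]
        push_cast; ring
      rw [h1, h2]; ring
    rw [hI, hA]; ring
  -- the limit of the RHS
  have hcomp : Tendsto (fun ρ : ℝ => 1 / (2 * σ ^ 2 * (ρ * N))) atTop (𝓝[>] (0:ℝ)) := by
    rw [tendsto_nhdsWithin_iff]
    constructor
    · have h1 : Tendsto (fun ρ : ℝ => 2 * σ ^ 2 * (ρ * N)) atTop atTop := by
        apply Tendsto.const_mul_atTop (by positivity)
        exact Tendsto.atTop_mul_const hN tendsto_id
      have h2 := h1.inv_tendsto_atTop
      simpa only [one_div, Pi.inv_def] using h2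
    · filter_upwards [eventually_gt_atTop 0] with ρ hρ
      exact mem_Ioi.mpr (by positivity)
  have hlim2 : Tendsto (fun ρ : ℝ => (1 / Real.log 2) * (h (1 / (2 * σ ^ 2 * (ρ * N))) + γ))
      atTop (𝓝 0) := by
    have h1 : Tendsto (fun ρ : ℝ => h (1 / (2 * σ ^ 2 * (ρ * N)))) atTop (𝓝 (-γ)) := by
      have := tendsto_h.comp hcomp
      rwa [integral_log_mul_exp_neg] at this
    have h2 := (h1.add_const γ).const_mul (1 / Real.log 2)
    simpa using h2
  exact hlim2.congr' (key.mono fun _ e => e.symm)
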